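/- arXiv:0808.0789 — 5 statements merged into one kernel-verified Lean document; each statement's English description precedes it below -/
import Mathlib

section
/- Let $g_\varepsilon(x) := \varepsilon^{(\log_\varepsilon |x|)^2}$. Then for each coordinate direction $i$ there exists $\varepsilon_0 \in (0,1)$ such that for all $\varepsilon < \varepsilon_0$ and all $x$ with $|x| \geq 1/2$, $|\partial_i g_\varepsilon(x)| \leq 16 (1+|x|)^2 \varepsilon^{-2}$; in particular $(\partial_i g_\varepsilon)$ satisfies a tempered moderateness estimate on $\{|x| \geq 1/2\}$. -/
/-!
Since `ε ^ ((a / log ε) ^ 2) = exp (a ^ 2 / log ε)`, the chain rule gives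
`∂ᵥ g_ε(x) = g_ε(x) · (2 log ‖x‖ / log ε) · ⟪x, v⟫ / ‖x‖²`. For `ε < e⁻¹` we have
`log ε ≤ -1`, so `0 < g_ε ≤ 1` and `|∂ᵥ g_ε(x)| ≤ 2 |log ‖x‖| ‖v‖ / ‖x‖`, which is at most `4`
once `‖x‖ ≥ 1/2` because then `|log ‖x‖| ≤ 2 ‖x‖`.
-/

open Real

theorem Real.rpow_sq_div_log (ε a : ℝ) (hε : 0 < ε) :
    ε ^ ((a / log ε) ^ 2) = exp (a ^ 2 / log ε) := by
  rw [rpow_def_of_pos hε]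
  rcases eq_or_ne (log ε) 0 with h | h
  · simp [h]
  · congr 1
    field_simp

theorem Real.abs_log_le_two_mul {t : ℝ} (ht : 1 / 2 ≤ t) : |log t| ≤ 2 * t := by
  have ht0 : 0 < t := by linarith
  have hinv : t⁻¹ ≤ 2 := by rw [inv_le_comm₀ ht0 two_pos]; linarith
  rw [abs_le]
  constructor
  · linarith [one_sub_inv_le_log_of_pos ht0]
  · linarith [log_le_sub_one_of_pos ht0]

section InnerProductSpace

variable {E : Type*} [NormedAddCommGroup E] [InnerProductSpace ℝ E]

open scoped RealInnerProductSpace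

theorem hasFDerivAt_norm {x : E} (hx : x ≠ 0) :
    HasFDerivAt (‖·‖) (‖x‖⁻¹ • innerSL ℝ x) x := by
  have h := (hasStrictFDerivAt_norm_sq x).hasFDerivAt.sqrt (by positivity)
  simp only [sqrt_sq (norm_nonneg _)] at h
  convert h using 1
  ext v
  simp only [smul_apply, coe_innerSL_apply, smul_eq_mul, one_div, mul_inv_rev,
    nsmul_eq_mul, Nat.cast_ofNat]
  ring

theorem fderiv_exp_sq_log_norm_div_apply (c : ℝ) {x : E} (hx : x ≠ 0) (v : E) :
    fderiv ℝ (fun y : E => exp (log ‖y‖ ^ 2 / c)) x v =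
      exp (log ‖x‖ ^ 2 / c) * (2 * log ‖x‖ / c) * (⟪x, v⟫ / ‖x‖ ^ 2) := by
  have h := (((hasFDerivAt_norm hx).log (norm_ne_zero_iff.mpr hx)).pow 2).mul_const c⁻¹ |>.exp
  simp only [← div_eq_mul_inv] at h
  rw [h.fderiv]
  simp only [Nat.add_one_sub_one, pow_one, nsmul_eq_mul, Nat.cast_ofNat,
    smul_apply, coe_innerSL_apply, smul_eq_mul]
  field_simp

theorem abs_fderiv_exp_sq_log_norm_div_apply_le {c : ℝ} (hc : c ≤ -1) {x : E} (hx : x ≠ 0)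
    (v : E) :
    |fderiv ℝ (fun y : E => exp (log ‖y‖ ^ 2 / c)) x v| ≤ 2 * |log ‖x‖| * ‖v‖ / ‖x‖ := by
  have hx0 : 0 < ‖x‖ := norm_pos_iff.mpr hx
  have hexp : exp (log ‖x‖ ^ 2 / c) ≤ 1 :=
    exp_le_one_iff.mpr (div_nonpos_of_nonneg_of_nonpos (sq_nonneg _) (by linarith))
  have hc' : 1 ≤ |c| := by rw [abs_of_neg (by linarith)]; linarith
  have hinner : |⟪x, v⟫| ≤ ‖x‖ * ‖v‖ := abs_real_inner_le_norm x v
  rw [fderiv_exp_sq_log_norm_div_apply c hx v, abs_mul, abs_mul, abs_of_pos (exp_pos _),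
    abs_div, abs_div, abs_mul, abs_two, abs_of_pos (by positivity : 0 < ‖x‖ ^ 2)]
  calc exp (log ‖x‖ ^ 2 / c) * (2 * |log ‖x‖| / |c|) * (|⟪x, v⟫| / ‖x‖ ^ 2)
      ≤ 1 * (2 * |log ‖x‖| / 1) * (‖x‖ * ‖v‖ / ‖x‖ ^ 2) := by gcongr
    _ = 2 * |log ‖x‖| * ‖v‖ / ‖x‖ := by field_simp

end InnerProductSpace

/-- For `g_ε(x) = ε^((log_ε |x|)^2)` there is `ε₀ ∈ (0,1)` such
that for all `ε < ε₀` and all `|x| ≥ 1/2`,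
`|∂ᵢ g_ε(x)| ≤ 16 (1+|x|)² ε^{-2}` (a tempered moderateness estimate). -/
theorem stmt4 (d : ℕ) (i : Fin d) :
    ∃ ε₀ ∈ Set.Ioo (0:ℝ) 1, ∀ ε : ℝ, 0 < ε → ε < ε₀ →
      ∀ x : EuclideanSpace ℝ (Fin d), 1/2 ≤ ‖x‖ →
        |fderiv ℝ (fun y : EuclideanSpace ℝ (Fin d) =>
            ε ^ ((Real.log ‖y‖ / Real.log ε)^2)) x (EuclideanSpace.single i 1)|
          ≤ 16 * (1 + ‖x‖)^2 * ε ^ (-(2:ℝ)) := by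
  refine ⟨exp (-1), ⟨exp_pos _, exp_lt_one_iff.mpr (by norm_num)⟩, fun ε hε hεlt x hx => ?_⟩
  have hx0 : 0 < ‖x‖ := by linarith
  have hlogε : log ε ≤ -1 := by simpa using (log_lt_log hε hεlt).le
  have hεpow : 1 ≤ ε ^ (-(2:ℝ)) :=
    one_le_rpow_of_pos_of_le_one_of_nonpos hε (hεlt.trans (exp_lt_one_iff.mpr (by norm_num))).le
      (by norm_num)
  simp only [rpow_sq_div_log _ _ hε]
  calc _ ≤ 2 * |log ‖x‖| * ‖EuclideanSpace.single i (1:ℝ)‖ / ‖x‖ :=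
        abs_fderiv_exp_sq_log_norm_div_apply_le hlogε (norm_pos_iff.mp hx0) _
    _ ≤ 2 * (2 * ‖x‖) * 1 / ‖x‖ := by
        rw [PiLp.norm_single, norm_one]
        gcongr
        exact abs_log_le_two_mul hx
    _ = 4 := by field_simp; ring
    _ ≤ 16 * 1 * 1 := by norm_num
    _ ≤ 16 * (1 + ‖x‖) ^ 2 * ε ^ (-(2:ℝ)) := by gcongr; nlinarith
end

section
/- Let $u_\varepsilon$ be as in the tempered counterexample ($u_\varepsilon(x) = (1-\sigma(x))g_\varepsilon(x) + \sigma(x)$ with $g_\varepsilon(x) = \varepsilon^{(\log_\varepsilon|x|)^2}$). Then for every integer $j \geq 0$ and every $\varepsilon \in (0,1)$, and every $x$ with $\varepsilon^{-j} \leq |x| < \varepsilon^{-j-1}$ and $|x| > 1$, one has $u_\varepsilon(x) > \varepsilon^{(j+1)^2}$. Consequently, for every moderate net of points $(x_\varepsilon)$ (i.e., $|x_\varepsilon| = O(\varepsilon^{-N})$ for some $N$) there exist $m \geq 0$ and $\varepsilon_0 > 0$ such that $u_\varepsilon(x_\varepsilon) > \varepsilon^m$ for all $\varepsilon < \varepsilon_0$;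 i.e., the point value $u(\widetilde{x})$ is strictly positive, hence invertible, at every moderate generalized point. -/
/-- With `u_ε(x) = (1-σ(x)) g_ε(x) + σ(x)` as in the tempered
counterexample: (a) for every `j ≥ 0`, `ε ∈ (0,1)` and `x` with
`ε^{-j} ≤ |x| < ε^{-j-1}` and `|x| > 1`, `u_ε(x) > ε^{(j+1)^2}`;
(b) consequently, for every moderate net of points `(x_ε)` there exist `m ≥ 0`
and `ε₀ > 0` with `u_ε(x_ε) > ε^m` for all `ε < ε₀`: the point value is
strictly positive, hence invertible, at every moderate generalized point. -/
theorem stmt6 (d : ℕ) (σ : EuclideanSpace ℝ (Fin d) → ℝ)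
    (hσsmooth : ContDiff ℝ (⊤ : ℕ∞) σ)
    (hσ1 : ∀ x, ‖x‖ ≤ 1/2 → σ x = 1)
    (hσ0 : ∀ x, 1 ≤ ‖x‖ → σ x = 0)
    (hσrange : ∀ x, σ x ∈ Set.Icc (0:ℝ) 1)
    (u : ℝ → EuclideanSpace ℝ (Fin d) → ℝ)
    (hu : ∀ ε x, u ε x = (1 - σ x) * ε ^ ((Real.log ‖x‖ / Real.log ε)^2) + σ x) :
    (∀ j : ℕ, ∀ ε : ℝ, 0 < ε → ε < 1 →
      ∀ x : EuclideanSpace ℝ (Fin d),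
        ε ^ (-(j:ℝ)) ≤ ‖x‖ → ‖x‖ < ε ^ (-((j:ℝ)+1)) → 1 < ‖x‖ →
          ε ^ (((j:ℝ)+1)^2) < u ε x) ∧
    (∀ xnet : ℝ → EuclideanSpace ℝ (Fin d),
      (∃ N : ℕ, ∃ C > 0, ∀ ε ∈ Set.Ioc (0:ℝ) 1, ‖xnet ε‖ ≤ C * ε ^ (-(N:ℝ))) →
      ∃ m : ℕ, ∃ ε₀ > 0, ∀ ε : ℝ, 0 < ε → ε < ε₀ → (ε:ℝ) ^ m < u ε (xnet ε)) := by
  have key : ∀ ε : ℝ, 0 < ε → ε < 1 → ∀ x : EuclideanSpace ℝ (Fin d),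
      ε ^ ((Real.log ‖x‖ / Real.log ε)^2) ≤ u ε x := by
    intro ε hε hε1 x
    rw [hu]
    have hg0 : (0:ℝ) < ε ^ ((Real.log ‖x‖ / Real.log ε)^2) := Real.rpow_pos_of_pos hε _
    have hg1 : ε ^ ((Real.log ‖x‖ / Real.log ε)^2) ≤ 1 :=
      Real.rpow_le_one hε.le hε1.le (sq_nonneg _)
    obtain ⟨hs0, hs1⟩ := hσrange x
    nlinarith [mul_nonneg hs0 (sub_nonneg.2 hg1)]
  constructor
  · intro j ε hε hε1 x hxl hxu hx1
    have hσx : σ x = 0 := hσ0 x hx1.le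
    have hL : Real.log ε < 0 := Real.log_neg hε hε1
    have hX : 0 < Real.log ‖x‖ := Real.log_pos hx1
    have hXu : Real.log ‖x‖ < (-((j:ℝ)+1)) * Real.log ε := by
      have h := Real.log_lt_log (by positivity) hxu
      rwa [Real.log_rpow hε] at h
    have ht : (Real.log ‖x‖ / Real.log ε)^2 < ((j:ℝ)+1)^2 := by
      rw [div_pow, div_lt_iff₀ (by nlinarith : (0:ℝ) < (Real.log ε)^2)]
      nlinarith [mul_pos (show (0:ℝ) < (-((j:ℝ)+1)) * Real.log ε - Real.log ‖x‖ by linarith)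
        (show (0:ℝ) < (-((j:ℝ)+1)) * Real.log ε + Real.log ‖x‖ by nlinarith)]
    calc ε ^ (((j:ℝ)+1)^2) < ε ^ ((Real.log ‖x‖ / Real.log ε)^2) :=
          Real.rpow_lt_rpow_of_exponent_gt hε hε1 ht
      _ ≤ u ε x := key ε hε hε1 x
  · rintro xnet ⟨N, C, hC, hbound⟩
    refine ⟨(N+1)^2 + 1, min (1/2) (1/C), by positivity, ?_⟩
    intro ε hε hεε₀
    have hε2 : ε < 1/2 := lt_of_lt_of_le hεε₀ (min_le_left _ _)
    have hεC : ε < 1/C := lt_of_lt_of_le hεε₀ (min_le_right _ _)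
    have hε1 : ε < 1 := by linarith
    have hεm1 : (ε:ℝ) ^ ((N+1)^2 + 1) < 1 := pow_lt_one₀ hε.le hε1 (by positivity)
    by_cases hx : ‖xnet ε‖ ≤ 1/2
    · have hσx : σ (xnet ε) = 1 := hσ1 _ hx
      rw [hu, hσx]
      simpa using hεm1
    · push_neg at hx
      have hx0 : (0:ℝ) < ‖xnet ε‖ := by linarith
      have hL : Real.log ε < 0 := Real.log_neg hε hε1
      have hL2 : Real.log ε < -Real.log 2 := by
        have h := Real.log_lt_log hε hε2
        rwa [one_div, Real.log_inv] at h
      have hXlow : -Real.log 2 < Real.log ‖xnet ε‖ := by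
        have h := Real.log_lt_log (by norm_num) hx
        rwa [one_div, Real.log_inv] at h
      have hb := hbound ε ⟨hε, hε1.le⟩
      have hlogC : Real.log C < -Real.log ε := by
        have hCε : C * ε < 1 := by
          rw [lt_div_iff₀ hC] at hεC
          linarith [hεC]
        have h := Real.log_lt_log (by positivity) hCε
        rw [Real.log_mul (ne_of_gt hC) (ne_of_gt hε), Real.log_one] at h
        linarith
      have hXup : Real.log ‖xnet ε‖ < -((N:ℝ)+1) * Real.log ε := by
        have h := Real.log_le_log hx0 hb
        rw [Real.log_mul (ne_of_gt hC) (by positivity),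
          Real.log_rpow hε] at h
        nlinarith
      have hXlow' : ((N:ℝ)+1) * Real.log ε < Real.log ‖xnet ε‖ := by
        have hN1 : (1:ℝ) ≤ (N:ℝ)+1 := by have := Nat.cast_nonneg (α:=ℝ) N; linarith
        nlinarith
      have ht : (Real.log ‖xnet ε‖ / Real.log ε)^2 < (((N+1)^2 + 1 : ℕ) : ℝ) := by
        rw [div_pow, div_lt_iff₀ (by nlinarith : (0:ℝ) < (Real.log ε)^2)]
        push_cast
        nlinarith [mul_pos (show (0:ℝ) < -((N:ℝ)+1) * Real.log ε - Real.log ‖xnet ε‖ by linarith)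
          (show (0:ℝ) < Real.log ‖xnet ε‖ - ((N:ℝ)+1) * Real.log ε by linarith),
          sq_nonneg (Real.log ε)]
      calc (ε:ℝ) ^ ((N+1)^2 + 1) = ε ^ ((((N+1)^2 + 1 : ℕ)):ℝ) := (Real.rpow_natCast ε _).symm
        _ < ε ^ ((Real.log ‖xnet ε‖ / Real.log ε)^2) :=
            Real.rpow_lt_rpow_of_exponent_gt hε hε1 ht
        _ ≤ u ε (xnet ε) := key ε hε hε1 _
end

section
/- Let $u_\varepsilon$ be as in the tempered counterexample, so that $u_\varepsilon(\varepsilon^{-j} e_1) = \varepsilon^{j^2}$ for every integer $j \geq 1$ and small $\varepsilon$. Then there is no net $(v_\varepsilon)$ of functions satisfying a tempered moderateness bound ($\exists N: |v_\varepsilon(x)| \leq \varepsilon^{-N}(1+|x|)^N$ for small $\varepsilon$) such that $u_\varepsilon v_\varepsilon - 1$ is tempered negligible ($\exists N_0 \forall p: \sup_x |u_\varepsilon(x) v_\varepsilon(x) - 1| \leq C_p \varepsilon^p (1+|x|)^{N_0}$). That is, $u$ is not invertible in $\mathcal{G}_\tau(\mathbb{R}^d)$. -/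
/-!
Evaluate along the points `x_ε = ε^{-j} e₁` with `j = N + 2`, where `N` is the moderateness
exponent of `v`. There `u_ε = ε^{j²}` beats the growth `ε^{-N} (1 + ε^{-j})^N ≤ 2^N ε^{-N-jN}` of
`v_ε`, so `|u_ε v_ε| ≤ 2^N ε`; and negligibility with `p = j N₀ + 1` absorbs the weight
`(1 + ε^{-j})^{N₀}`, so `|u_ε v_ε - 1| ≤ C 2^{N₀} ε`. Both tend to `0`, which contradicts
`1 ≤ |u_ε v_ε - 1| + |u_ε v_ε|`.
-/

open Filter Topology Set

lemma eventually_nhdsGT_zero_of_exists {P : ℝ → Prop}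
    (h : ∃ ε₀ > 0, ∀ ε : ℝ, 0 < ε → ε < ε₀ → P ε) : ∀ᶠ ε in 𝓝[>] 0, P ε := by
  obtain ⟨ε₀, hε₀, hP⟩ := h
  filter_upwards [Ioo_mem_nhdsGT hε₀] with ε hε using hP ε hε.1 hε.2

lemma not_eventually_one_le_mul (K : ℝ) : ¬ ∀ᶠ ε in 𝓝[>] (0 : ℝ), 1 ≤ K * ε := by
  intro h
  have hlim : Tendsto (fun ε : ℝ => K * ε) (𝓝[>] 0) (𝓝 0) := by
    simpa using ((continuous_const_mul K).tendsto 0).mono_left nhdsWithin_le_nhds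
  obtain ⟨ε, h1, h2⟩ := (h.and (hlim.eventually (gt_mem_nhds one_pos))).exists
  linarith

lemma one_add_inv_pow_pow_le {ε : ℝ} (hε0 : 0 < ε) (hε1 : ε ≤ 1) (k n : ℕ) :
    (1 + (ε ^ k)⁻¹) ^ n ≤ 2 ^ n / ε ^ (k * n) := by
  have hone : 1 ≤ (ε ^ k)⁻¹ := one_le_inv₀ (by positivity) |>.mpr (pow_le_one₀ hε0.le hε1)
  calc (1 + (ε ^ k)⁻¹) ^ n ≤ (2 * (ε ^ k)⁻¹) ^ n := by gcongr; linarith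
    _ = 2 ^ n / ε ^ (k * n) := by rw [mul_pow, inv_pow, ← pow_mul, div_eq_mul_inv]

lemma abs_pow_mul_le_of_moderate {ε b : ℝ} (hε0 : 0 < ε) (hε1 : ε ≤ 1) {N j : ℕ}
    (hj : N + j * N + 1 ≤ j ^ 2) (hb : |b| ≤ (ε ^ N)⁻¹ * (1 + (ε ^ j)⁻¹) ^ N) :
    |ε ^ (j ^ 2) * b| ≤ 2 ^ N * ε := by
  obtain ⟨m, hm⟩ := Nat.exists_eq_add_of_le hj
  calc |ε ^ (j ^ 2) * b| = ε ^ (N + j * N) * ε ^ (m + 1) * |b| := by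
        rw [abs_mul, abs_of_pos (by positivity), hm, ← pow_add]; ring_nf
    _ ≤ ε ^ (N + j * N) * ε ^ (m + 1) * ((ε ^ N)⁻¹ * (2 ^ N / ε ^ (j * N))) := by
        gcongr; exact hb.trans (by gcongr; exact one_add_inv_pow_pow_le hε0 hε1 j N)
    _ = 2 ^ N * ε ^ (m + 1) := by field_simp; ring
    _ ≤ 2 ^ N * ε := by gcongr; exact pow_le_of_le_one hε0.le hε1 (by omega)

lemma abs_le_of_negligible {ε c C : ℝ} (hε0 : 0 < ε) (hε1 : ε ≤ 1) (hC : 0 ≤ C) {j M : ℕ}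
    (hc : |c| ≤ C * ε ^ (j * M + 1) * (1 + (ε ^ j)⁻¹) ^ M) : |c| ≤ C * 2 ^ M * ε := by
  calc |c| ≤ C * ε ^ (j * M + 1) * (2 ^ M / ε ^ (j * M)) :=
        hc.trans (by gcongr; exact one_add_inv_pow_pow_le hε0 hε1 j M)
    _ = C * 2 ^ M * ε := by field_simp; ring

/-- Let `u_ε` be as in the tempered counterexample, so that
`u_ε(ε^{-j} e₁) = ε^{j²}` for every integer `j ≥ 1` and small `ε`. Then there
is no tempered-moderately-bounded net `(v_ε)` with `u_ε v_ε - 1` tempered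
negligible: `u` is not invertible in `𝒢_τ(ℝ^d)`. -/
theorem stmt7 (d : ℕ) (hd : 0 < d)
    (u : ℝ → EuclideanSpace ℝ (Fin d) → ℝ)
    (hu : ∀ j : ℕ, 1 ≤ j → ∃ ε₀ > 0, ∀ ε : ℝ, 0 < ε → ε < ε₀ →
      u ε (EuclideanSpace.single ⟨0, hd⟩ (ε ^ (-(j:ℝ)))) = ε ^ ((j:ℝ)^2)) :
    ¬ ∃ v : ℝ → EuclideanSpace ℝ (Fin d) → ℝ,
      (∃ N : ℕ, ∃ ε₀ > 0, ∀ ε : ℝ, 0 < ε → ε < ε₀ →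
        ∀ x, |v ε x| ≤ ε ^ (-(N:ℝ)) * (1 + ‖x‖) ^ N) ∧
      (∃ N₀ : ℕ, ∀ p : ℕ, ∃ C > 0, ∃ ε₀ > 0, ∀ ε : ℝ, 0 < ε → ε < ε₀ →
        ∀ x, |u ε x * v ε x - 1| ≤ C * ε ^ p * (1 + ‖x‖) ^ N₀) := by
  rintro ⟨v, ⟨N, hv⟩, N₀, hneg⟩
  obtain ⟨C, hC, hn⟩ := hneg ((N + 2) * N₀ + 1)
  apply not_eventually_one_le_mul (2 ^ N + C * 2 ^ N₀)
  filter_upwards [eventually_nhdsGT_zero_of_exists (hu (N + 2) (by omega)),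
    eventually_nhdsGT_zero_of_exists hv, eventually_nhdsGT_zero_of_exists hn,
    Ioo_mem_nhdsGT one_pos] with ε huε hvε hnε ⟨hε0, hε1⟩
  set x := EuclideanSpace.single (⟨0, hd⟩ : Fin d) (ε ^ (-((N + 2 : ℕ) : ℝ)))
  have hrpow (n : ℕ) : ε ^ (-(n : ℝ)) = (ε ^ n)⁻¹ := by
    rw [Real.rpow_neg hε0.le, Real.rpow_natCast]
  have hx : ‖x‖ = (ε ^ (N + 2))⁻¹ := by
    rw [PiLp.norm_single, hrpow, Real.norm_of_nonneg (by positivity)]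
  have huv : |u ε x * v ε x| ≤ 2 ^ N * ε := by
    rw [huε, ← Nat.cast_pow, Real.rpow_natCast]
    refine abs_pow_mul_le_of_moderate hε0 hε1.le (by nlinarith) ?_
    simpa only [hrpow, hx] using hvε x
  have huv_sub : |u ε x * v ε x - 1| ≤ C * 2 ^ N₀ * ε :=
    abs_le_of_negligible hε0 hε1.le hC.le (by simpa only [hx] using hnε x)
  have htriangle : 1 ≤ |u ε x * v ε x - 1| + |u ε x * v ε x| := by
    simpa [add_comm] using abs_sub (u ε x * v ε x) (u ε x * v ε x - 1)
  linarith
end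

section
/- Fix $m \in \mathbb{R}$. The scaling map $s_m$ sending a net $(u_\varepsilon)$ to $(x \mapsto u_\varepsilon(\varepsilon^m x))$ maps $\mathcal{E}_{M,\tau}(\mathbb{R}^d)$ into $\mathcal{E}_{M,\tau}(\mathbb{R}^d)$ and $\mathcal{N}_\tau(\mathbb{R}^d)$ into $\mathcal{N}_\tau(\mathbb{R}^d)$, and hence induces a well-defined algebra isomorphism $s_m : \mathcal{G}_\tau(\mathbb{R}^d) \to \mathcal{G}_\tau(\mathbb{R}^d)$ with inverse $s_{-m}$. -/
/-- Tempered moderate nets of smooth functions on `ℝ^d`. -/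
def EMtau (d : ℕ) (u : ℝ → EuclideanSpace ℝ (Fin d) → ℝ) : Prop :=
  (∀ ε ∈ Set.Ioc (0:ℝ) 1, ContDiff ℝ (⊤ : ℕ∞) (u ε)) ∧
  ∀ n : ℕ, ∃ N : ℕ, ∃ C > 0, ∃ ε₀ > 0, ∀ ε ∈ Set.Ioc (0:ℝ) 1, ε < ε₀ →
    ∀ x, ‖iteratedFDeriv ℝ n (u ε) x‖ ≤ C * ε ^ (-(N:ℝ)) * (1 + ‖x‖) ^ N

/-- Tempered negligible nets on `ℝ^d`. -/
def Ntau (d : ℕ) (u : ℝ → EuclideanSpace ℝ (Fin d) → ℝ) : Prop :=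
  ∃ N : ℕ, ∀ p : ℕ, ∃ C > 0, ∃ ε₀ > 0, ∀ ε ∈ Set.Ioc (0:ℝ) 1, ε < ε₀ →
    ∀ x, |u ε x| ≤ C * ε ^ p * (1 + ‖x‖) ^ N

/-- The scaling map `s_m`: `(u_ε) ↦ (x ↦ u_ε(ε^m x))`. -/
noncomputable def scaleMap (d : ℕ) (m : ℝ) (u : ℝ → EuclideanSpace ℝ (Fin d) → ℝ) :
    ℝ → EuclideanSpace ℝ (Fin d) → ℝ :=
  fun ε x => u ε ((ε ^ m) • x)

lemma scale_smooth {E : Type*} [NormedAddCommGroup E] [NormedSpace ℝ E] (c : ℝ)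
    {f : E → ℝ} (hf : ContDiff ℝ (⊤ : ℕ∞) f) : ContDiff ℝ (⊤ : ℕ∞) (fun x => f (c • x)) :=
  hf.comp ((c • ContinuousLinearMap.id ℝ E).contDiff)

set_option maxHeartbeats 1000000 in
lemma scale_iteratedFDeriv_le {E : Type*} [NormedAddCommGroup E] [NormedSpace ℝ E] (c : ℝ)
    {f : E → ℝ} (hf : ContDiff ℝ (⊤ : ℕ∞) f) (n : ℕ) (x : E) :
    ‖iteratedFDeriv ℝ n (fun x => f (c • x)) x‖ ≤ |c| ^ n * ‖iteratedFDeriv ℝ n f (c • x)‖ := by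
  set g : E →L[ℝ] E := c • ContinuousLinearMap.id ℝ E with hgdef
  have hg : ∀ y, g y = c • y := fun y => rfl
  have h := g.iteratedFDeriv_comp_right hf x (i := n) (by exact_mod_cast le_top)
  have hcomp : (fun x => f (c • x)) = f ∘ g := rfl
  rw [hcomp, h]
  calc ‖(iteratedFDeriv ℝ n f (g x)).compContinuousLinearMap fun _ => g‖
      ≤ ‖iteratedFDeriv ℝ n f (g x)‖ * ∏ _i : Fin n, ‖g‖ :=
        ContinuousMultilinearMap.norm_compContinuousLinearMap_le _ _
    _ ≤ |c| ^ n * ‖iteratedFDeriv ℝ n f (c • x)‖ := by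
        rw [Finset.prod_const, Finset.card_univ, Fintype.card_fin, hg, mul_comm]
        have hgnorm : ‖g‖ ≤ |c| := by
          rw [hgdef]
          calc ‖c • ContinuousLinearMap.id ℝ E‖ ≤ ‖c‖ * ‖ContinuousLinearMap.id ℝ E‖ :=
                ContinuousLinearMap.opNorm_smul_le c _
            _ ≤ ‖c‖ * 1 :=
                mul_le_mul_of_nonneg_left ContinuousLinearMap.norm_id_le (norm_nonneg _)
            _ = |c| := by rw [mul_one, Real.norm_eq_abs]
        exact mul_le_mul_of_nonneg_right (pow_le_pow_left₀ (norm_nonneg g) hgnorm n)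
          (norm_nonneg _)

/-- key scalar estimates -/
lemma rpow_le_aux {ε : ℝ} (hε0 : 0 < ε) (hε1 : ε ≤ 1) (m : ℝ) :
    ε ^ m ≤ ε ^ (-((⌈|m|⌉₊ : ℕ) : ℝ)) := by
  apply Real.rpow_le_rpow_of_exponent_ge hε0 hε1
  have h1 : |m| ≤ (⌈|m|⌉₊ : ℝ) := Nat.le_ceil _
  have h2 : -m ≤ |m| := neg_le_abs m
  linarith

lemma one_le_rpow_aux {ε : ℝ} (hε0 : 0 < ε) (hε1 : ε ≤ 1) (M : ℕ) :
    (1:ℝ) ≤ ε ^ (-(M:ℝ)) := by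
  calc (1:ℝ) = ε ^ (0:ℝ) := (Real.rpow_zero ε).symm
    _ ≤ ε ^ (-(M:ℝ)) := Real.rpow_le_rpow_of_exponent_ge hε0 hε1 (neg_nonpos.mpr (Nat.cast_nonneg M))

/-- `s_m` maps `ℰ_{M,τ}` into `ℰ_{M,τ}` and `𝒩_τ` into `𝒩_τ`,
and induces a well-defined algebra isomorphism of `𝒢_τ(ℝ^d)` with inverse
`s_{-m}`: it is multiplicative, additive, unital, and `s_{-m} ∘ s_m = id`
on representatives (for `ε ∈ (0,1]`). -/
theorem stmt11 (d : ℕ) (m : ℝ) :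
    (∀ u, EMtau d u → EMtau d (scaleMap d m u)) ∧
    (∀ u, Ntau d u → Ntau d (scaleMap d m u)) ∧
    (∀ u : ℝ → EuclideanSpace ℝ (Fin d) → ℝ, ∀ ε ∈ Set.Ioc (0:ℝ) 1, ∀ x,
      scaleMap d (-m) (scaleMap d m u) ε x = u ε x) ∧
    (∀ u : ℝ → EuclideanSpace ℝ (Fin d) → ℝ, ∀ ε ∈ Set.Ioc (0:ℝ) 1, ∀ x,
      scaleMap d m (scaleMap d (-m) u) ε x = u ε x) ∧
    (∀ u v : ℝ → EuclideanSpace ℝ (Fin d) → ℝ, ∀ ε x,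
      scaleMap d m (fun ε x => u ε x * v ε x) ε x
        = scaleMap d m u ε x * scaleMap d m v ε x) ∧
    (∀ u v : ℝ → EuclideanSpace ℝ (Fin d) → ℝ, ∀ ε x,
      scaleMap d m (fun ε x => u ε x + v ε x) ε x
        = scaleMap d m u ε x + scaleMap d m v ε x) := by
  set M : ℕ := ⌈|m|⌉₊ with hM
  refine ⟨?_, ?_, ?_, ?_, ?_, ?_⟩
  · -- EMtau
    rintro u ⟨hsm, hmod⟩
    constructor
    · intro ε hε
      exact scale_smooth _ (hsm ε hε)
    · intro n
      obtain ⟨N, C, hC, ε₀, hε₀, hb⟩ := hmod n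
      refine ⟨N + M * (n + N), C, hC, min ε₀ 1, lt_min hε₀ one_pos, ?_⟩
      rintro ε ⟨hε0, hε1⟩ hεlt x
      have hεε₀ : ε < ε₀ := lt_of_lt_of_le hεlt (min_le_left _ _)
      set c : ℝ := ε ^ m with hc
      have hc0 : 0 < c := Real.rpow_pos_of_pos hε0 m
      set A : ℝ := ε ^ (-(M:ℝ)) with hA
      have hA0 : 0 < A := Real.rpow_pos_of_pos hε0 _
      have hA1 : (1:ℝ) ≤ A := one_le_rpow_aux hε0 hε1 M
      have hcA : c ≤ A := rpow_le_aux hε0 hε1 m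
      have key : ‖iteratedFDeriv ℝ n (fun y => u ε (c • y)) x‖
          ≤ |c| ^ n * ‖iteratedFDeriv ℝ n (u ε) (c • x)‖ :=
        scale_iteratedFDeriv_le c (hsm ε ⟨hε0, hε1⟩) n x
      have hnorm : ‖c • x‖ = c * ‖x‖ := by
        rw [norm_smul, Real.norm_eq_abs, abs_of_pos hc0]
      have h1 : 1 + ‖c • x‖ ≤ A * (1 + ‖x‖) := by
        rw [hnorm, mul_add, mul_one]
        have : c * ‖x‖ ≤ A * ‖x‖ := by
          apply mul_le_mul_of_nonneg_right hcA (norm_nonneg _)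
        linarith
      have hx0 : (0:ℝ) ≤ 1 + ‖x‖ := by positivity
      have hbb := hb ε ⟨hε0, hε1⟩ hεε₀ (c • x)
      calc ‖iteratedFDeriv ℝ n (scaleMap d m u ε) x‖
          = ‖iteratedFDeriv ℝ n (fun y => u ε (c • y)) x‖ := rfl
        _ ≤ |c| ^ n * ‖iteratedFDeriv ℝ n (u ε) (c • x)‖ := key
        _ ≤ A ^ n * (C * ε ^ (-(N:ℝ)) * (1 + ‖c • x‖) ^ N) := by
            apply mul_le_mul
            · apply pow_le_pow_left₀ (abs_nonneg _)
              rw [abs_of_pos hc0]; exact hcA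
            · exact hbb
            · exact norm_nonneg _
            · positivity
        _ ≤ A ^ n * (C * ε ^ (-(N:ℝ)) * (A * (1 + ‖x‖)) ^ N) := by
            have hεN : (0:ℝ) < ε ^ (-(N:ℝ)) := Real.rpow_pos_of_pos hε0 _
            apply mul_le_mul_of_nonneg_left _ (by positivity)
            apply mul_le_mul_of_nonneg_left _ (by positivity)
            apply pow_le_pow_left₀ (by positivity) h1
        _ = C * (A ^ (n + N) * ε ^ (-(N:ℝ))) * (1 + ‖x‖) ^ N := by
            rw [mul_pow, pow_add]; ring
        _ ≤ C * ε ^ (-((N + M * (n + N) : ℕ) : ℝ)) * (1 + ‖x‖) ^ (N + M * (n + N)) := by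
            have heq : A ^ (n + N) * ε ^ (-(N:ℝ)) = ε ^ (-((N + M * (n + N) : ℕ) : ℝ)) := by
              rw [hA, ← Real.rpow_natCast (ε ^ (-(M:ℝ))) (n + N),
                ← Real.rpow_mul hε0.le, ← Real.rpow_add hε0]
              push_cast
              ring_nf
            rw [heq]
            apply mul_le_mul_of_nonneg_left _ (by positivity)
            exact pow_le_pow_right₀ (by linarith [norm_nonneg x]) (by omega)
  · -- Ntau
    rintro u ⟨N, hneg⟩
    refine ⟨N, fun p => ?_⟩
    obtain ⟨C, hC, ε₀, hε₀, hb⟩ := hneg (p + M * N)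
    refine ⟨C, hC, min ε₀ 1, lt_min hε₀ one_pos, ?_⟩
    rintro ε ⟨hε0, hε1⟩ hεlt x
    have hεε₀ : ε < ε₀ := lt_of_lt_of_le hεlt (min_le_left _ _)
    set c : ℝ := ε ^ m with hc
    have hc0 : 0 < c := Real.rpow_pos_of_pos hε0 m
    set A : ℝ := ε ^ (-(M:ℝ)) with hA
    have hA0 : 0 < A := Real.rpow_pos_of_pos hε0 _
    have hA1 : (1:ℝ) ≤ A := one_le_rpow_aux hε0 hε1 M
    have hcA : c ≤ A := rpow_le_aux hε0 hε1 m
    have hnorm : ‖c • x‖ = c * ‖x‖ := by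
      rw [norm_smul, Real.norm_eq_abs, abs_of_pos hc0]
    have h1 : 1 + ‖c • x‖ ≤ A * (1 + ‖x‖) := by
      rw [hnorm, mul_add, mul_one]
      have : c * ‖x‖ ≤ A * ‖x‖ := mul_le_mul_of_nonneg_right hcA (norm_nonneg _)
      linarith
    calc |scaleMap d m u ε x| = |u ε (c • x)| := rfl
      _ ≤ C * ε ^ (p + M * N) * (1 + ‖c • x‖) ^ N := hb ε ⟨hε0, hε1⟩ hεε₀ (c • x)
      _ ≤ C * ε ^ (p + M * N) * (A * (1 + ‖x‖)) ^ N := by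
          apply mul_le_mul_of_nonneg_left _ (by positivity)
          apply pow_le_pow_left₀ (by positivity) h1
      _ = C * (ε ^ (p + M * N) * A ^ N) * (1 + ‖x‖) ^ N := by rw [mul_pow]; ring
      _ = C * ε ^ p * (1 + ‖x‖) ^ N := by
          congr 1
          rw [hA, ← Real.rpow_natCast (ε ^ (-(M:ℝ))) N, ← Real.rpow_mul hε0.le,
            ← Real.rpow_natCast ε (p + M * N), ← Real.rpow_add hε0,
            ← Real.rpow_natCast ε p]
          congr 1
          push_cast
          ring
  · -- s_{-m} ∘ s_m = id
    rintro u ε ⟨hε0, _⟩ x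
    simp only [scaleMap, smul_smul]
    rw [← Real.rpow_add hε0]
    simp
  · rintro u ε ⟨hε0, _⟩ x
    simp only [scaleMap, smul_smul]
    rw [← Real.rpow_add hε0]
    simp
  · intro u v ε x; rfl
  · intro u v ε x; rfl
end

section
/- Let $\Omega = (0,\infty) \times \Omega'$ with $\Omega' \subseteq \mathbb{R}^{d-1}$ open, and define $u_\varepsilon(x_1,\ldots,x_d) := u_\varepsilon^{(1)}(x_1)$ where $u_\varepsilon^{(1)}(t) = (1-\sigma(t))\varepsilon^{(\log_\varepsilon t)^2} + \sigma(t)$ with $\sigma$ a smooth cutoff equal to $1$ for $t \leq 1/2$ and $0$ for $t \geq 1$. Then for every integer $j \geq 0$, every $\varepsilon \in (0,1/2)$, and every $x \in \Omega$ with $|x| < \varepsilon^{-j}$, one has $u_\varepsilon(x) > \varepsilon^{(j+1)^2}$; in particular $u(\widetilde{x})$ is strictly positive for every moderate generalized point $\widetilde{x}$ of $\Omega$. -/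
lemma coord_abs_le_norm {n : ℕ} (x : EuclideanSpace ℝ (Fin (n+1))) : |x 0| ≤ ‖x‖ := by
  rw [EuclideanSpace.norm_eq]
  have h1 : |x 0| = Real.sqrt (‖x 0‖ ^ 2) := by
    rw [Real.sqrt_sq_eq_abs, abs_norm, Real.norm_eq_abs]
  rw [h1]
  apply Real.sqrt_le_sqrt
  exact Finset.single_le_sum (f := fun i => ‖x i‖ ^ 2)
    (fun i _ => by positivity) (Finset.mem_univ 0)

lemma key_exp (j : ℕ) (ε t : ℝ) (hε : 0 < ε) (hε2 : ε < 1/2) (ht : 1/2 ≤ t)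
    (ht2 : t < ε ^ (-(j:ℝ))) :
    ε ^ (((j:ℝ)+1)^2) < ε ^ ((Real.log t / Real.log ε)^2) := by
  have hε1 : ε < 1 := by linarith
  apply Real.rpow_lt_rpow_of_exponent_gt hε hε1
  have hlε : Real.log ε < -Real.log 2 := by
    have := Real.log_lt_log hε hε2
    rw [show (1:ℝ)/2 = 2⁻¹ by norm_num, Real.log_inv] at this
    linarith
  have hl2 : (0:ℝ) < Real.log 2 := Real.log_pos (by norm_num)
  have hlεneg : Real.log ε < 0 := by linarith
  -- |log t| < (j+1) * (-log ε)
  have habs : |Real.log t| < ((j:ℝ)+1) * (-Real.log ε) := by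
    have hjε : (0:ℝ) ≤ (j:ℝ) * (-Real.log ε) := mul_nonneg (Nat.cast_nonneg j) (by linarith)
    rcases le_or_gt t 1 with h1 | h1
    · have hlow : -Real.log 2 ≤ Real.log t := by
        have := Real.log_le_log (by norm_num) ht
        rw [show (1:ℝ)/2 = 2⁻¹ by norm_num, Real.log_inv] at this
        exact this
      have hhigh : Real.log t ≤ 0 := Real.log_nonpos (by linarith) h1
      rw [abs_of_nonpos hhigh]
      nlinarith
    · have hlt : Real.log t < -(j:ℝ) * Real.log ε := by
        have := Real.log_lt_log (by linarith) ht2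
        rwa [Real.log_rpow hε] at this
      rw [abs_of_nonneg (Real.log_nonneg h1.le)]
      nlinarith
  have hne : Real.log ε ≠ 0 := ne_of_lt hlεneg
  rw [div_pow]
  rw [div_lt_iff₀ (by positivity)]
  have h2 : Real.log t ^ 2 = |Real.log t| ^ 2 := (sq_abs _).symm
  have h3 : Real.log ε ^ 2 = (-Real.log ε) ^ 2 := by ring
  rw [h2, h3]
  have hpos : (0:ℝ) < -Real.log ε := by linarith
  calc |Real.log t| ^ 2 < (((j:ℝ)+1) * (-Real.log ε)) ^ 2 := by
        apply sq_lt_sq' _ habs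
        nlinarith [abs_nonneg (Real.log t)]
    _ = ((j:ℝ)+1)^2 * (-Real.log ε)^2 := by ring

lemma key_u (j : ℕ) (ε t : ℝ) (hε : 0 < ε) (hε2 : ε < 1/2) (ht : 0 < t)
    (ht2 : t < ε ^ (-(j:ℝ))) (σt : ℝ) (hσ : σt ∈ Set.Icc (0:ℝ) 1)
    (hσ1 : t ≤ 1/2 → σt = 1) :
    ε ^ (((j:ℝ)+1)^2) < (1 - σt) * ε ^ ((Real.log t / Real.log ε)^2) + σt := by
  have hε1 : ε < 1 := by linarith
  have hB1 : ε ^ (((j:ℝ)+1)^2) < 1 :=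
    Real.rpow_lt_one hε.le hε1 (by positivity)
  rcases le_or_gt t (1/2) with h | h
  · rw [hσ1 h]; simpa using hB1
  · have hA := key_exp j ε t hε hε2 h.le ht2
    obtain ⟨h0, h1⟩ := hσ
    nlinarith [mul_nonneg (sub_nonneg.2 h1) (sub_nonneg.2 hA.le),
      mul_nonneg h0 (sub_nonneg.2 hB1.le)]

theorem stmt19 (d : ℕ) (Ω' : Set (EuclideanSpace ℝ (Fin d))) (hΩ'o : IsOpen Ω')
    (σ : ℝ → ℝ) (hσsmooth : ContDiff ℝ (⊤ : ℕ∞) σ)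
    (hσ1 : ∀ t : ℝ, t ≤ 1/2 → σ t = 1) (hσ0 : ∀ t : ℝ, 1 ≤ t → σ t = 0)
    (hσrange : ∀ t, σ t ∈ Set.Icc (0:ℝ) 1)
    (Ω : Set (EuclideanSpace ℝ (Fin (d+1))))
    (hΩ : Ω = {x | 0 < x 0 ∧ WithLp.toLp 2 (fun i : Fin d => x i.succ) ∈ Ω'})
    (u : ℝ → EuclideanSpace ℝ (Fin (d+1)) → ℝ)
    (hu : ∀ ε x, u ε x =
      (1 - σ (x 0)) * ε ^ ((Real.log (x 0) / Real.log ε)^2) + σ (x 0)) :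
    (∀ j : ℕ, ∀ ε : ℝ, 0 < ε → ε < 1/2 → ∀ x ∈ Ω, ‖x‖ < ε ^ (-(j:ℝ)) →
      ε ^ (((j:ℝ)+1)^2) < u ε x) ∧
    (∀ x : ℝ → EuclideanSpace ℝ (Fin (d+1)),
      (∀ ε ∈ Set.Ioc (0:ℝ) 1, x ε ∈ Ω) →
      (∃ N : ℕ, ∃ C > 0, ∃ ε₀ > 0, ∀ ε : ℝ, 0 < ε → ε < ε₀ → ‖x ε‖ ≤ C * ε ^ (-(N:ℝ))) →
      ∃ m : ℕ, ∃ ε₀ > 0, ∀ ε : ℝ, 0 < ε → ε < ε₀ → (ε:ℝ) ^ m < u ε (x ε)) := by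
  have main : ∀ j : ℕ, ∀ ε : ℝ, 0 < ε → ε < 1/2 → ∀ x ∈ Ω, ‖x‖ < ε ^ (-(j:ℝ)) →
      ε ^ (((j:ℝ)+1)^2) < u ε x := by
    intro j ε hε hε2 x hx hxn
    rw [hΩ] at hx
    obtain ⟨hx0, -⟩ := hx
    have ht2 : x 0 < ε ^ (-(j:ℝ)) := by
      calc x 0 ≤ |x 0| := le_abs_self _
        _ ≤ ‖x‖ := coord_abs_le_norm x
        _ < _ := hxn
    rw [hu]
    exact key_u j ε (x 0) hε hε2 hx0 ht2 (σ (x 0)) (hσrange _) (hσ1 _)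
  refine ⟨main, ?_⟩
  intro x hΩx ⟨N, C, hC, ε₀, hε₀, hbound⟩
  refine ⟨(N+2)^2, min (min ε₀ (1/C)) (min (1/2) 1), by positivity, ?_⟩
  intro ε hε hεlt
  rw [lt_min_iff, lt_min_iff, lt_min_iff] at hεlt
  obtain ⟨⟨h1, h2⟩, h3, h4⟩ := hεlt
  have hxΩ : x ε ∈ Ω := hΩx ε ⟨hε, h4.le⟩
  have hnorm : ‖x ε‖ < ε ^ (-((N:ℝ)+1)) := by
    calc ‖x ε‖ ≤ C * ε ^ (-(N:ℝ)) := hbound ε hε h1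
      _ < ε⁻¹ * ε ^ (-(N:ℝ)) := by
        apply mul_lt_mul_of_pos_right _ (Real.rpow_pos_of_pos hε _)
        rw [lt_div_iff₀ hC] at h2
        rw [inv_eq_one_div, lt_div_iff₀ hε]
        linarith [mul_comm C ε ▸ h2]
      _ = ε ^ (-((N:ℝ)+1)) := by
        rw [← Real.rpow_neg_one ε, ← Real.rpow_add hε]; ring_nf
  have hnorm' : ‖x ε‖ < ε ^ (-((N+1 : ℕ):ℝ)) := by push_cast; exact hnorm
  have := main (N+1) ε hε h3 (x ε) hxΩ hnorm'
  calc (ε:ℝ) ^ ((N+2)^2 : ℕ) = ε ^ ((((N+1:ℕ):ℝ))+1)^2 := by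
        rw [← Real.rpow_natCast ε ((N+2)^2)]; push_cast; ring_nf
    _ < u ε (x ε) := this
end
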